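/- Let ξ ∈ ℝ³ and f ∈ L¹(ℝ³; ℂ), and define g(t) = ∫_{ℝ³} f(p) e^{−2πi(ξ·v(p))t} d³p. Then for every Schwartz function ψ : ℝ → ℂ whose Fourier transform ψ̂(ω) = ∫_ℝ ψ(t) e^{−2πiωt} dt vanishes for all ω with |ω| ≤ |ξ|, one has ∫_ℝ g(t) ψ(t) dt = 0. (Equivalently, the distributional Fourier transform of g in t is supported in the interval [−|ξ|, |ξ|]: a consequence of the universal relativistic speed limit |v(p)| < 1.) -/

import Mathlib

open MeasureTheory Real

/-! Since `|v(p)| < 1`, every plane wave `e^{-2πi (ξ·v(p)) t}` making up `g` has a frequency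
`ξ·v(p) ∈ [-|ξ|, |ξ|]`. By Fubini, `∫ g ψ = ∫ f(p) ψ̂(ξ·v(p)) dp`, and `ψ̂` vanishes at each of
these frequencies. -/

noncomputable def relVel (p : EuclideanSpace ℝ (Fin 3)) : EuclideanSpace ℝ (Fin 3) :=
  (Real.sqrt (1 + ‖p‖ ^ 2))⁻¹ • p

lemma norm_relVel_lt_one (p : EuclideanSpace ℝ (Fin 3)) : ‖relVel p‖ < 1 := by
  have hpos : 0 < √(1 + ‖p‖ ^ 2) := Real.sqrt_pos.2 (by positivity)
  rw [relVel, norm_smul, norm_inv, Real.norm_of_nonneg hpos.le, inv_mul_lt_iff₀ hpos, mul_one]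
  calc ‖p‖ = √(‖p‖ ^ 2) := (Real.sqrt_sq (norm_nonneg _)).symm
    _ < √(1 + ‖p‖ ^ 2) := Real.sqrt_lt_sqrt (by positivity) (by linarith)

lemma continuous_relVel : Continuous relVel := by
  unfold relVel
  fun_prop (disch := exact fun p => (Real.sqrt_pos.2 (by positivity)).ne')

lemma abs_inner_relVel_le (ξ p : EuclideanSpace ℝ (Fin 3)) : |inner ℝ ξ (relVel p)| ≤ ‖ξ‖ :=
  calc |inner ℝ ξ (relVel p)| ≤ ‖ξ‖ * ‖relVel p‖ := abs_real_inner_le_norm ξ (relVel p)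
    _ ≤ ‖ξ‖ := mul_le_of_le_one_right (norm_nonneg ξ) (norm_relVel_lt_one p).le

section Superposition

variable {α : Type*} [MeasurableSpace α] {μ : Measure α}
  {f : α → ℂ} {ω : α → ℝ} {ψ : ℝ → ℂ}

lemma integrable_prod_mul_cexp_mul (hf : Integrable f μ) (hω : Measurable ω) (hψ : Integrable ψ) :
    Integrable (fun z : ℝ × α =>
      f z.2 * Complex.exp (-2 * (π : ℂ) * Complex.I * (ω z.2 : ℂ) * (z.1 : ℂ)) * ψ z.1)
      (volume.prod μ) := by
  refine (hψ.mul_prod hf).norm.mono' ?_ (Filter.Eventually.of_forall fun z => ?_)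
  · exact (hf.1.comp_snd.mul (by fun_prop : Measurable _).aestronglyMeasurable).mul hψ.1.comp_fst
  · simp [Complex.norm_exp, mul_comm]

theorem integral_integral_mul_cexp_mul_swap [SFinite μ] (hf : Integrable f μ) (hω : Measurable ω)
    (hψ : Integrable ψ) :
    ∫ t : ℝ, (∫ p, f p * Complex.exp (-2 * (π : ℂ) * Complex.I * (ω p : ℂ) * (t : ℂ)) ∂μ) * ψ t =
      ∫ p, f p *
        (∫ t : ℝ, ψ t * Complex.exp (-2 * (π : ℂ) * Complex.I * (ω p : ℂ) * (t : ℂ))) ∂μ := by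
  calc _ = ∫ t : ℝ, ∫ p,
          f p * Complex.exp (-2 * (π : ℂ) * Complex.I * (ω p : ℂ) * (t : ℂ)) * ψ t ∂μ := by
        simp_rw [integral_mul_const]
    _ = ∫ p, (∫ t : ℝ,
          f p * Complex.exp (-2 * (π : ℂ) * Complex.I * (ω p : ℂ) * (t : ℂ)) * ψ t) ∂μ :=
        integral_integral_swap (integrable_prod_mul_cexp_mul hf hω hψ)
    _ = _ := by
        simp_rw [← integral_const_mul, mul_assoc, mul_comm (ψ _)]

end Superposition

/-- The distributional Fourier transform in `t` of a mode function
`g(t) = ∫ f(p) e^{-2πi (ξ·v(p)) t} dp` is supported in `[-|ξ|, |ξ|]`: pairing `g` against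
any Schwartz function whose Fourier transform vanishes on `{|ω| ≤ |ξ|}` gives zero. -/
theorem mode_fourier_transform_supported_in_ball
    (ξ : EuclideanSpace ℝ (Fin 3))
    (f : EuclideanSpace ℝ (Fin 3) → ℂ) (hf : Integrable f)
    (g : ℝ → ℂ)
    (hg : ∀ t : ℝ, g t =
      ∫ p : EuclideanSpace ℝ (Fin 3),
        f p * Complex.exp (-2 * (Real.pi : ℂ) * Complex.I *
          ((inner ℝ ξ (relVel p) : ℝ) : ℂ) * (t : ℂ)))
    (ψ : SchwartzMap ℝ ℂ)
    (hψ : ∀ ω : ℝ, |ω| ≤ ‖ξ‖ →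
      (∫ t : ℝ, ψ t * Complex.exp (-2 * (Real.pi : ℂ) * Complex.I * (ω : ℂ) * (t : ℂ))) = 0) :
    (∫ t : ℝ, g t * ψ t) = 0 := by
  have hω : Measurable fun p => inner ℝ ξ (relVel p) :=
    (continuous_const.inner continuous_relVel).measurable
  simp_rw [hg, integral_integral_mul_cexp_mul_swap hf hω ψ.integrable,
    hψ _ (abs_inner_relVel_le ξ _), mul_zero, integral_zero]
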